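/- For all nonnegative integers r and s, in GL₃(ℤ_p) one has x_{23}^{-p^r} · x_{2233}^{p^s} · x_{23}^{p^r} · x_{2233}^{-p^s} = x_{23}^{p^r·((1+p)^{2p^s} − 1)}, where the exponent p^r·((1+p)^{2p^s} − 1) is a natural number. -/

import Mathlib

/-! Both matrices lie in explicit one-parameter families: `x23 ^ k` is the transvection with
(1, 2) entry `k p`, and `x2233 ^ p ^ s` is diagonal with entries `1, u ^ p ^ s, u⁻¹ ^ p ^ s`.
Conjugating a transvection `1 + c E₁₂` by `diag(d₀, d₁, d₂)` rescales `c` by `d₁ / d₂`, here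
`u ^ (2 p ^ s) = (1 + p) ^ (2 p ^ s)`, so `x2233 ^ p ^ s` conjugates `x23 ^ p ^ r` into
`x23 ^ (p ^ r (1 + p) ^ (2 p ^ s))`, and the commutator collapses to a power of `x23`. -/

open Matrix

namespace Matrix

variable {n R : Type*} [Fintype n] [DecidableEq n] [CommRing R]

theorem transvection_pow {i j : n} (hij : i ≠ j) (c : R) (k : ℕ) :
    transvection i j c ^ k = transvection i j (k * c) := by
  induction k with
  | zero => simp
  | succ k ih =>
    rw [pow_succ, ih, transvection_mul_transvection_same _ _ hij]
    push_cast
    ring_nf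

theorem diagonal_mul_transvection {i j : n} (d : n → R) {c c' : R} (h : d i * c = c' * d j) :
    diagonal d * transvection i j c = transvection i j c' * diagonal d := by
  ext a b
  simp only [transvection, add_apply, diagonal_mul, mul_diagonal, single_apply, one_apply]
  split_ifs <;> grind

end Matrix

theorem inv_pow_mul_mul_pow_mul_inv_of_mul_pow_eq {G : Type*} [Group G] {x y : G} {m k : ℕ}
    (hk : 1 ≤ k) (h : y * x ^ m = x ^ (m * k) * y) :
    (x ^ m)⁻¹ * y * x ^ m * y⁻¹ = x ^ (m * (k - 1)) := by
  rw [mul_assoc _ y, h, Nat.mul_sub_one, pow_sub _ (Nat.le_mul_of_pos_right m hk)]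
  group

theorem stmt_8_general (p : ℕ) [Fact p.Prime]
    (x23 x2233 : GL (Fin 3) ℤ_[p])
    (u : ℤ_[p]ˣ) (hu : (u : ℤ_[p]) = 1 + p)
    (h23 : (x23 : Matrix (Fin 3) (Fin 3) ℤ_[p]) = 1 + Matrix.single 1 2 (p : ℤ_[p]))
    (h2233 : (x2233 : Matrix (Fin 3) (Fin 3) ℤ_[p]) = Matrix.diagonal ![1, (u : ℤ_[p]), (↑u⁻¹ : ℤ_[p])])
    (r s : ℕ) :
    (x23 ^ p ^ r)⁻¹ * x2233 ^ p ^ s * x23 ^ p ^ r * (x2233 ^ p ^ s)⁻¹ = x23 ^ (p ^ r * ((1 + p) ^ (2 * p ^ s) - 1)) := by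
  have hx23_pow (k : ℕ) : ((x23 ^ k : GL (Fin 3) ℤ_[p]) : Matrix (Fin 3) (Fin 3) ℤ_[p]) =
      transvection 1 2 ((k : ℤ_[p]) * p) := by
    rw [Units.val_pow_eq_pow_val, h23, ← transvection, transvection_pow (by decide)]
  have hx2233_pow : ((x2233 ^ p ^ s : GL (Fin 3) ℤ_[p]) : Matrix (Fin 3) (Fin 3) ℤ_[p]) =
      diagonal ![1, (u : ℤ_[p]) ^ p ^ s, (↑u⁻¹ : ℤ_[p]) ^ p ^ s] := by
    rw [Units.val_pow_eq_pow_val, h2233, diagonal_pow]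
    congr 1
    ext i
    fin_cases i <;> simp
  have hinv : (u : ℤ_[p]) ^ p ^ s * (↑u⁻¹ : ℤ_[p]) ^ p ^ s = 1 := by
    rw [← mul_pow, Units.mul_inv, one_pow]
  have hconj : x2233 ^ p ^ s * x23 ^ p ^ r =
      x23 ^ (p ^ r * (1 + p) ^ (2 * p ^ s)) * x2233 ^ p ^ s := by
    refine Units.ext ?_
    rw [Units.val_mul, Units.val_mul, hx23_pow, hx23_pow, hx2233_pow]
    refine diagonal_mul_transvection _ ?_
    simp only [cons_val_one, cons_val_two, tail_cons, head_cons]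
    push_cast
    rw [← hu, mul_comm 2, pow_mul]
    linear_combination (-(p : ℤ_[p]) ^ r * p * (u : ℤ_[p]) ^ p ^ s) * hinv
  exact inv_pow_mul_mul_pow_mul_inv_of_mul_pow_eq (Nat.one_le_pow _ _ (by omega)) hconj

theorem stmt_8 (p : ℕ) [Fact p.Prime] (hp : p ≠ 2)
    (x23 x2233 : GL (Fin 3) ℤ_[p])
    (u : ℤ_[p]ˣ) (hu : (u : ℤ_[p]) = 1 + p)
    (h23 : (x23 : Matrix (Fin 3) (Fin 3) ℤ_[p]) = 1 + Matrix.single 1 2 (p : ℤ_[p]))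
    (h2233 : (x2233 : Matrix (Fin 3) (Fin 3) ℤ_[p]) = Matrix.diagonal ![1, (u : ℤ_[p]), (↑u⁻¹ : ℤ_[p])])
    (r s : ℕ) :
    (x23 ^ p ^ r)⁻¹ * x2233 ^ p ^ s * x23 ^ p ^ r * (x2233 ^ p ^ s)⁻¹ = x23 ^ (p ^ r * ((1 + p) ^ (2 * p ^ s) - 1)) :=
  stmt_8_general p x23 x2233 u hu h23 h2233 r s
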